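/- Let X : ℝⁿ → ℝⁿ be a C¹ vector field whose Jacobian DX(x) is a symmetric linear map for every x ∈ ℝⁿ (i.e., the external tensor F = DX − (DX)ᵀ vanishes identically), and let f(x) = ½‖X(x)‖². Then every solution x : I → ℝⁿ of the flow equation x′(t) = X(x(t)) satisfies the potential dynamical system x″(t) = ∇f(x(t)) for all t ∈ I. -/

import Mathlib

/-!
Differentiating the flow equation `x' = X ∘ x` once more gives `x'' = DX(x) X(x)`, while the
gradient of `½‖X‖²` is `(DX)ᵀ X`, and these agree when `DX` is symmetric.
-/

open Filter Topology ContinuousLinearMap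

open scoped RealInnerProductSpace

section Energy

variable {E F : Type*} [NormedAddCommGroup E] [InnerProductSpace ℝ E] [CompleteSpace E]
  [NormedAddCommGroup F] [InnerProductSpace ℝ F] [CompleteSpace F]

theorem HasFDerivAt.hasGradientAt_half_norm_sq {X : E → F} {X' : E →L[ℝ] F} {x : E}
    (hX : HasFDerivAt X X' x) :
    HasGradientAt (fun y => (1 / 2 : ℝ) * ‖X y‖ ^ 2) (adjoint X' (X x)) x := by
  refine (hX.norm_sq.const_mul (1 / 2 : ℝ)).congr_fderiv ?_
  ext v
  simp only [smul_apply, comp_apply, innerSL_apply_apply,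
    smul_eq_mul, InnerProductSpace.toDual_apply_apply, adjoint_inner_left]
  ring

end Energy

theorem hasDerivAt_deriv_of_flow {E : Type*} [NormedAddCommGroup E] [NormedSpace ℝ E]
    {X : E → E} {c : ℝ → E} {t : ℝ} (hc : ∀ᶠ s in 𝓝 t, HasDerivAt c (X (c s)) s)
    (hX : DifferentiableAt ℝ X (c t)) :
    HasDerivAt (deriv c) (fderiv ℝ X (c t) (X (c t))) t :=
  (hX.hasFDerivAt.comp_hasDerivAt t hc.self_of_nhds).congr_of_eventuallyEq
    (hc.mono fun _ hs => hs.deriv)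

/-- If the Jacobian of a C¹ vector field `X` is symmetric everywhere
(i.e. the external tensor `F = DX - (DX)ᵀ` vanishes), then every solution of the flow
`x' = X(x)` satisfies the potential dynamical system `x'' = ∇f(x)`, `f = ½‖X‖²`. -/
theorem flow_solution_potential_dynamics {n : ℕ}
    (X : EuclideanSpace ℝ (Fin n) → EuclideanSpace ℝ (Fin n))
    (hX : ContDiff ℝ 1 X)
    (hsymm : ∀ x, ContinuousLinearMap.adjoint (fderiv ℝ X x) = fderiv ℝ X x)
    (f : EuclideanSpace ℝ (Fin n) → ℝ)
    (hf : ∀ x, f x = (1 / 2) * ‖X x‖ ^ 2)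
    (a b : ℝ) (c : ℝ → EuclideanSpace ℝ (Fin n))
    (hc : ∀ t ∈ Set.Ioo a b, HasDerivAt c (X (c t)) t) :
    ∀ t ∈ Set.Ioo a b, HasDerivAt (deriv c) (gradient f (c t)) t := by
  intro t ht
  have hXt : DifferentiableAt ℝ X (c t) := hX.differentiable one_ne_zero (c t)
  have hgrad : gradient f (c t) = fderiv ℝ X (c t) (X (c t)) := by
    rw [funext hf, hXt.hasFDerivAt.hasGradientAt_half_norm_sq.gradient, hsymm]
  rw [hgrad]
  exact hasDerivAt_deriv_of_flow (eventually_of_mem (Ioo_mem_nhds ht.1 ht.2) hc) hXt
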